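/- arXiv:1708.05381 — 2 statements merged into one kernel-verified Lean document; each statement's English description precedes it below -/
import Mathlib

section
/- For every integer x ≥ 0, a(x+1,0) − a(x,0) = (1/(2π)) · ∫₀^{2π} sin((x + 1/2)·θ) / √(14 − 2·cos θ) dθ. -/
open intervalIntegral

/-- The potential kernel `a(x,y)` of the triangular lattice, defined by the double
integral `a(x,y) = (1/4π²) ∫∫ (1 - cos(xθ+yφ))/(6 - 2cosθ - 2cosφ - 2cos(θ+φ)) dθ dφ`. -/
noncomputable def triPot (x y : ℤ) : ℝ :=
  (1 / (4 * Real.pi ^ 2)) *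
    ∫ θ in (0 : ℝ)..(2 * Real.pi), ∫ φ in (0 : ℝ)..(2 * Real.pi),
      (1 - Real.cos ((x : ℝ) * θ + (y : ℝ) * φ)) /
        (6 - 2 * Real.cos θ - 2 * Real.cos φ - 2 * Real.cos (θ + φ))

/-!
Shifting `φ` by `θ / 2` writes the denominator as `a - b cos φ` with `a = 6 - 2 cos θ` and
`b = 4 cos (θ / 2)`, whose integral over a period is `2π / √(a² - b²)`; here
`a² - b² = 4 sin² (θ / 2) (14 - 2 cos θ)`. Since
`1 - cos kθ = 2 sin (θ / 2) ∑_{j<k} sin ((j + 1/2) θ)`, the factor `sin (θ / 2)` cancels and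
`a(k, 0) = (1 / 2π) ∑_{j<k} ∫ sin ((j + 1/2) θ) / √(14 - 2 cos θ) dθ`, a sum of integrals of
continuous functions. The increment `a(x + 1, 0) - a(x, 0)` is its last term.
-/

open Real Finset

lemma mul_cos_lt_of_abs_lt {a b : ℝ} (hb : |b| < a) (φ : ℝ) : b * cos φ < a :=
  calc b * cos φ ≤ |b| * |cos φ| := abs_mul b (cos φ) ▸ le_abs_self _
    _ ≤ |b| := mul_le_of_le_one_right (abs_nonneg b) (abs_cos_le_one φ)
    _ < a := hb

-- Unlike the textbook antiderivative through `tan (φ / 2)`, this one is smooth on all of `ℝ`.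
lemma hasDerivAt_inv_sub_mul_cos_antideriv {a b : ℝ} (hb : |b| < a) (φ : ℝ) :
    HasDerivAt
      (fun φ ↦ (φ + 2 * arctan (b * sin φ / (a - b * cos φ + √(a ^ 2 - b ^ 2)))) / √(a ^ 2 - b ^ 2))
      (a - b * cos φ)⁻¹ φ := by
  set s := √(a ^ 2 - b ^ 2)
  have hs : 0 < s := sqrt_pos.2 (by nlinarith [abs_nonneg b, sq_abs b])
  have hs2 : s ^ 2 = a ^ 2 - b ^ 2 := sq_sqrt (by nlinarith [abs_nonneg b, sq_abs b])
  have hD : 0 < a - b * cos φ := sub_pos.2 (mul_cos_lt_of_abs_lt hb φ)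
  have hV : 0 < a - b * cos φ + s := by linarith
  have hq : HasDerivAt (fun φ ↦ b * sin φ / (a - b * cos φ + s))
      ((b * cos φ * (a - b * cos φ + s) - b * sin φ * (b * sin φ)) / (a - b * cos φ + s) ^ 2) φ :=
    ((hasDerivAt_sin φ).const_mul b).div
      (by simpa using (((hasDerivAt_cos φ).const_mul b).const_sub a).add_const s) hV.ne'
  refine (((hasDerivAt_id φ).add ((hasDerivAt_arctan _).comp φ hq |>.const_mul 2)).div_const s
    ).congr_deriv ?_
  have hsc := sin_sq_add_cos_sq φ
  have hW : 1 + (b * sin φ / (a - b * cos φ + s)) ^ 2 =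
      2 * (a + s) * (a - b * cos φ) / (a - b * cos φ + s) ^ 2 := by
    field_simp
    linear_combination hs2 + b ^ 2 * hsc
  have has : 0 < a + s := by linarith [abs_nonneg b]
  rw [hW]
  field_simp
  linear_combination -hs2 - b ^ 2 * hsc

theorem integral_inv_sub_mul_cos {a b : ℝ} (hb : |b| < a) :
    ∫ φ in (0 : ℝ)..(2 * π), (a - b * cos φ)⁻¹ = 2 * π / √(a ^ 2 - b ^ 2) := by
  have hcont : Continuous fun φ ↦ (a - b * cos φ)⁻¹ :=
    (continuous_const.sub (continuous_const.mul continuous_cos)).inv₀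
      fun φ ↦ (sub_pos.2 (mul_cos_lt_of_abs_lt hb φ)).ne'
  rw [integral_eq_sub_of_hasDerivAt (fun φ _ ↦ hasDerivAt_inv_sub_mul_cos_antideriv hb φ)
    (hcont.intervalIntegrable _ _)]
  simp

lemma triangular_symbol_eq_sub_mul_cos (θ φ : ℝ) :
    6 - 2 * cos θ - 2 * cos φ - 2 * cos (θ + φ) =
      (6 - 2 * cos θ) - 4 * cos (θ / 2) * cos (φ + θ / 2) := by
  have h := cos_add_cos φ (θ + φ)
  rw [show (φ + (θ + φ)) / 2 = φ + θ / 2 by ring, show (φ - (θ + φ)) / 2 = -(θ / 2) by ring,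
    cos_neg] at h
  linarith

theorem integral_inv_triangular_symbol {θ : ℝ} (h : sin (θ / 2) ≠ 0) :
    ∫ φ in (0 : ℝ)..(2 * π), (6 - 2 * cos θ - 2 * cos φ - 2 * cos (θ + φ))⁻¹ =
      π / (|sin (θ / 2)| * √(14 - 2 * cos θ)) := by
  simp_rw [triangular_symbol_eq_sub_mul_cos θ]
  set a := 6 - 2 * cos θ
  set b := 4 * cos (θ / 2)
  have hcos : cos θ = 1 - 2 * sin (θ / 2) ^ 2 := by
    rw [← cos_two_mul_eq_one_sub, mul_div_cancel₀ θ two_ne_zero]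
  have hsc := sin_sq_add_cos_sq (θ / 2)
  have hsin : 0 < sin (θ / 2) ^ 2 := by positivity
  have hb : |b| < a := by
    have : |b| ≤ 4 := by
      rw [abs_mul, abs_of_pos four_pos]
      linarith [abs_cos_le_one (θ / 2)]
    linarith
  have hab : √(a ^ 2 - b ^ 2) = 2 * |sin (θ / 2)| * √(14 - 2 * cos θ) := by
    rw [show a ^ 2 - b ^ 2 = (2 * |sin (θ / 2)|) ^ 2 * (14 - 2 * cos θ) by
        rw [mul_pow 2, sq_abs]
        linear_combination (-16) * hsc + (4 * cos θ - 20) * hcos,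
      sqrt_mul (sq_nonneg _), sqrt_sq (by positivity)]
  have hper : Function.Periodic (fun φ ↦ (a - b * cos φ)⁻¹) (2 * π) := fun φ ↦ by
    dsimp only
    rw [cos_add_two_pi]
  rw [integral_comp_add_right (fun φ ↦ (a - b * cos φ)⁻¹), zero_add, add_comm (2 * π),
    hper.intervalIntegral_add_eq (θ / 2) 0, zero_add, integral_inv_sub_mul_cos hb, hab, mul_assoc,
    mul_div_mul_left _ _ two_ne_zero]

lemma one_sub_cos_nat_mul_eq_sum_sin (k : ℕ) (θ : ℝ) :
    1 - cos (k * θ) = 2 * sin (θ / 2) * ∑ j ∈ range k, sin ((j + 1 / 2) * θ) := by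
  have h := sin_mul_sum_sin k θ (θ / 2)
  rw [show ((k : ℝ) - 1) * θ / 2 + θ / 2 = k * θ / 2 by ring] at h
  have h2 := cos_two_mul_eq_one_sub (k * θ / 2)
  rw [mul_div_cancel₀ _ two_ne_zero] at h2
  have hsum : ∑ j ∈ range k, sin ((j + 1 / 2) * θ) = ∑ j ∈ range k, sin (θ * j + θ / 2) :=
    sum_congr rfl fun j _ ↦ by ring_nf
  rw [h2, hsum, mul_assoc, h]
  ring

lemma sin_nat_add_half_mul_of_sin_half_eq_zero {θ : ℝ} (h : sin (θ / 2) = 0) (j : ℕ) :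
    sin ((j + 1 / 2) * θ) = 0 := by
  obtain ⟨n, hn⟩ := sin_eq_zero_iff.1 h
  rw [show ((j : ℝ) + 1 / 2) * θ = ((2 * j + 1) * n : ℤ) * π by
    push_cast; linear_combination -(2 * j + 1) * hn]
  exact sin_int_mul_pi _

theorem integral_triPot_integrand_nat_zero (k : ℕ) {θ : ℝ} (hθ : 0 ≤ sin (θ / 2)) :
    ∫ φ in (0 : ℝ)..(2 * π), (1 - cos (k * θ)) / (6 - 2 * cos θ - 2 * cos φ - 2 * cos (θ + φ)) =
      2 * π * ∑ j ∈ range k, sin ((j + 1 / 2) * θ) / √(14 - 2 * cos θ) := by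
  simp_rw [div_eq_mul_inv (1 - cos (k * θ))]
  rw [integral_const_mul, one_sub_cos_nat_mul_eq_sum_sin]
  rcases hθ.eq_or_lt with h | h
  · simp only [← h, mul_zero, zero_mul]
    exact (mul_eq_zero_of_right _ <| sum_eq_zero fun j _ ↦ by
      rw [sin_nat_add_half_mul_of_sin_half_eq_zero h.symm, zero_div]).symm
  · rw [integral_inv_triangular_symbol h.ne', abs_of_pos h, ← sum_div]
    field_simp

theorem triPot_natCast_zero_eq_sum (k : ℕ) :
    triPot k 0 = 1 / (2 * π) *
      ∑ j ∈ range k, ∫ θ in (0 : ℝ)..(2 * π), sin ((j + 1 / 2) * θ) / √(14 - 2 * cos θ) := by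
  have hcont (j : ℕ) : Continuous fun θ ↦ sin ((j + 1 / 2) * θ) / √(14 - 2 * cos θ) :=
    (continuous_sin.comp (continuous_const.mul continuous_id)).div
      (continuous_const.sub (continuous_const.mul continuous_cos)).sqrt
      fun θ ↦ (sqrt_pos.2 (by linarith [cos_le_one θ])).ne'
  unfold triPot
  simp only [Int.cast_natCast, Int.cast_zero, zero_mul, add_zero]
  rw [integral_congr fun θ hθ ↦ integral_triPot_integrand_nat_zero k ?_, integral_const_mul,
    integral_finsetSum fun j _ ↦ (hcont j).intervalIntegrable _ _]
  · field_simp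
    ring
  · rw [Set.uIcc_of_le two_pi_pos.le] at hθ
    exact sin_nonneg_of_nonneg_of_le_pi (by linarith [hθ.1]) (by linarith [hθ.2])

/-- Increments of the triangular-lattice potential kernel along the `x`-axis:
`a(x+1,0) - a(x,0) = (1/2π) ∫₀^{2π} sin((x+1/2)θ)/√(14 - 2cosθ) dθ`. -/
theorem triPot_axis_increment :
    ∀ x : ℕ, triPot ((x : ℤ) + 1) 0 - triPot (x : ℤ) 0 =
      (1 / (2 * Real.pi)) *
        ∫ θ in (0 : ℝ)..(2 * Real.pi),
          Real.sin (((x : ℝ) + 1 / 2) * θ) / Real.sqrt (14 - 2 * Real.cos θ) := by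
  intro x
  rw [← Nat.cast_succ, triPot_natCast_zero_eq_sum, triPot_natCast_zero_eq_sum, sum_range_succ,
    mul_add, add_sub_cancel_left]
end

section
/- Minor-ratio formula for the inverse of a submatrix: suppose the 2×2 matrix M₀ = [[A⁻¹(v₂,w₁), A⁻¹(v₂,w₂)], [A⁻¹(v₃,w₁), A⁻¹(v₃,w₂)]] is invertible. Then B is invertible, and for every b ∉ {v₂,v₃} and every w ∉ {w₁,w₂}, the (b,w) entry of B⁻¹ equals det M / det M₀, where M is the 3×3 matrix [[A⁻¹(b,w), A⁻¹(b,w₁), A⁻¹(b,w₂)], [A⁻¹(v₂,w), A⁻¹(v₂,w₁), A⁻¹(v₂,w₂)], [A⁻¹(v₃,w), A⁻¹(v₃,w₁), A⁻¹(v₃,w₂)]]. -/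
lemma sum_compl_pair {F : Type*} [AddCommGroup F] {ι : Type*} [Fintype ι] [DecidableEq ι]
    (v₂ v₃ : ι) (hv : v₂ ≠ v₃) (f : ι → F) :
    ∑ k : {j : ι // j ≠ v₂ ∧ j ≠ v₃}, f k.1 = (∑ k, f k) - f v₂ - f v₃ := by
  classical
  have h1 : ∑ k ∈ Finset.univ.filter (fun j => j ≠ v₂ ∧ j ≠ v₃), f k
      = ∑ k : {j : ι // j ≠ v₂ ∧ j ≠ v₃}, f k.1 :=
    Finset.sum_subtype _ (by simp) f
  have h2 : Finset.univ.filter (fun j : ι => ¬(j ≠ v₂ ∧ j ≠ v₃)) = {v₂, v₃} := by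
    ext x; simp; tauto
  have h3 := Finset.sum_filter_add_sum_filter_not Finset.univ (fun j : ι => j ≠ v₂ ∧ j ≠ v₃) f
  rw [h1, h2, Finset.sum_pair hv] at h3
  rw [← h3]; abel

/-- auxiliary candidate inverse matrix -/
def mrC {F : Type*} [Field F] {ι : Type*} (P : Matrix ι ι F) (w₁ w₂ v₂ v₃ : ι) :
    Matrix {j : ι // j ≠ v₂ ∧ j ≠ v₃} {i : ι // i ≠ w₁ ∧ i ≠ w₂} F :=
  fun b w => Matrix.det !![P b.1 w.1, P b.1 w₁, P b.1 w₂;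
                           P v₂ w.1, P v₂ w₁, P v₂ w₂;
                           P v₃ w.1, P v₃ w₁, P v₃ w₂] /
             Matrix.det !![P v₂ w₁, P v₂ w₂; P v₃ w₁, P v₃ w₂]

/-- Minor-ratio formula for the inverse of a submatrix: let `A` be an invertible
matrix over a field with rows and columns indexed by a finite type `ι`, fix distinct
row indices `w₁ ≠ w₂` and distinct column indices `v₂ ≠ v₃`, and let `B` be the
submatrix of `A` obtained by deleting rows `w₁, w₂` and columns `v₂, v₃`.  If the
`2×2` matrix `M₀` of entries of `A⁻¹` at rows `v₂, v₃` and columns `w₁, w₂` is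
invertible, then `B` is invertible and each entry `B⁻¹(b,w)` equals `det M / det M₀`,
where `M` is the `3×3` matrix bordering `M₀` by the entries of `A⁻¹` at `b` and `w`. -/
theorem submatrix_inverse_minor_ratio {F : Type*} [Field F] {ι : Type*} [Fintype ι]
    [DecidableEq ι] (A : Matrix ι ι F) (hA : IsUnit A.det)
    (w₁ w₂ v₂ v₃ : ι) (hw : w₁ ≠ w₂) (hv : v₂ ≠ v₃)
    (B : Matrix {i : ι // i ≠ w₁ ∧ i ≠ w₂} {j : ι // j ≠ v₂ ∧ j ≠ v₃} F)
    (hB : ∀ i j, B i j = A i.1 j.1)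
    (hM₀ : Matrix.det !![A⁻¹ v₂ w₁, A⁻¹ v₂ w₂; A⁻¹ v₃ w₁, A⁻¹ v₃ w₂] ≠ 0) :
    (∃ C : Matrix {j : ι // j ≠ v₂ ∧ j ≠ v₃} {i : ι // i ≠ w₁ ∧ i ≠ w₂} F,
      B * C = 1 ∧ C * B = 1) ∧
    (∀ C : Matrix {j : ι // j ≠ v₂ ∧ j ≠ v₃} {i : ι // i ≠ w₁ ∧ i ≠ w₂} F,
      B * C = 1 → C * B = 1 →
      ∀ (b : ι) (hb : b ≠ v₂ ∧ b ≠ v₃) (w : ι) (hw' : w ≠ w₁ ∧ w ≠ w₂),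
        C ⟨b, hb⟩ ⟨w, hw'⟩ =
          Matrix.det !![A⁻¹ b w, A⁻¹ b w₁, A⁻¹ b w₂;
                        A⁻¹ v₂ w, A⁻¹ v₂ w₁, A⁻¹ v₂ w₂;
                        A⁻¹ v₃ w, A⁻¹ v₃ w₁, A⁻¹ v₃ w₂] /
            Matrix.det !![A⁻¹ v₂ w₁, A⁻¹ v₂ w₂; A⁻¹ v₃ w₁, A⁻¹ v₃ w₂]) := by
  classical
  set d : F := A⁻¹ v₂ w₁ * A⁻¹ v₃ w₂ - A⁻¹ v₂ w₂ * A⁻¹ v₃ w₁ with hd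
  have hdet2 : Matrix.det !![A⁻¹ v₂ w₁, A⁻¹ v₂ w₂; A⁻¹ v₃ w₁, A⁻¹ v₃ w₂] = d := by
    rw [Matrix.det_fin_two]; simp [hd]
  have hd0 : d ≠ 0 := hdet2 ▸ hM₀
  set C := mrC A⁻¹ w₁ w₂ v₂ v₃ with hCdef
  have hCapp : ∀ (b : {j : ι // j ≠ v₂ ∧ j ≠ v₃}) (w : {i : ι // i ≠ w₁ ∧ i ≠ w₂}),
      C b w = Matrix.det !![A⁻¹ b.1 w.1, A⁻¹ b.1 w₁, A⁻¹ b.1 w₂;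
                           A⁻¹ v₂ w.1, A⁻¹ v₂ w₁, A⁻¹ v₂ w₂;
                           A⁻¹ v₃ w.1, A⁻¹ v₃ w₁, A⁻¹ v₃ w₂] / d := by
    intro b w; rw [hCdef, mrC, hdet2]
  have hmul : ∀ i c : ι, ∑ k, A i k * A⁻¹ k c = if i = c then 1 else 0 := by
    intro i c
    rw [← Matrix.mul_apply, Matrix.mul_nonsing_inv A hA, Matrix.one_apply]
  have hmul' : ∀ r j : ι, ∑ k, A⁻¹ r k * A k j = if r = j then 1 else 0 := by
    intro r j
    rw [← Matrix.mul_apply, Matrix.nonsing_inv_mul A hA, Matrix.one_apply]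
  have hS : ∀ i c : ι, ∑ k : {j : ι // j ≠ v₂ ∧ j ≠ v₃}, A i k.1 * A⁻¹ k.1 c
      = (if i = c then 1 else 0) - A i v₂ * A⁻¹ v₂ c - A i v₃ * A⁻¹ v₃ c := by
    intro i c
    rw [sum_compl_pair v₂ v₃ hv (fun k => A i k * A⁻¹ k c), hmul i c]
  have hT : ∀ r j : ι, ∑ k : {i : ι // i ≠ w₁ ∧ i ≠ w₂}, A⁻¹ r k.1 * A k.1 j
      = (if r = j then 1 else 0) - A⁻¹ r w₁ * A w₁ j - A⁻¹ r w₂ * A w₂ j := by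
    intro r j
    rw [sum_compl_pair w₁ w₂ hw (fun k => A⁻¹ r k * A k j), hmul' r j]
  have hBC : B * C = 1 := by
    ext i j
    rw [Matrix.mul_apply, Matrix.one_apply]
    set g₀ : F := A⁻¹ v₂ w₁ * A⁻¹ v₃ w₂ - A⁻¹ v₂ w₂ * A⁻¹ v₃ w₁ with hg₀
    set g₁ : F := -(A⁻¹ v₂ j.1 * A⁻¹ v₃ w₂ - A⁻¹ v₂ w₂ * A⁻¹ v₃ j.1) with hg₁
    set g₂ : F := A⁻¹ v₂ j.1 * A⁻¹ v₃ w₁ - A⁻¹ v₂ w₁ * A⁻¹ v₃ j.1 with hg₂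
    have key : ∀ k : {j : ι // j ≠ v₂ ∧ j ≠ v₃},
        B i k * C k j = (A i.1 k.1 * A⁻¹ k.1 j.1 * g₀ + A i.1 k.1 * A⁻¹ k.1 w₁ * g₁
          + A i.1 k.1 * A⁻¹ k.1 w₂ * g₂) / d := by
      intro k
      rw [hB, hCapp, Matrix.det_fin_three, hg₀, hg₁, hg₂]
      simp only [Matrix.cons_val', Matrix.cons_val_zero, Matrix.cons_val_one, Matrix.head_cons,
        Matrix.empty_val', Matrix.cons_val_fin_one, Matrix.head_fin_const, Matrix.cons_val_two,
        Matrix.tail_cons, Matrix.of_apply]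
      ring
    rw [Finset.sum_congr rfl (fun k _ => key k), ← Finset.sum_div,
      Finset.sum_add_distrib, Finset.sum_add_distrib,
      ← Finset.sum_mul, ← Finset.sum_mul, ← Finset.sum_mul,
      hS i.1 j.1, hS i.1 w₁, hS i.1 w₂, if_neg i.2.1, if_neg i.2.2]
    have hij : (i = j) = (i.1 = j.1) := by
      simp [Subtype.ext_iff]
    by_cases h : i.1 = j.1
    · rw [if_pos h, if_pos (by exact Subtype.ext h), div_eq_iff hd0, hd]
      simp only [hg₀, hg₁, hg₂]
      ring
    · rw [if_neg h, if_neg (fun hh => h (congrArg Subtype.val hh)), div_eq_iff hd0, hd]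
      simp only [hg₀, hg₁, hg₂]
      ring
  have hCB : C * B = 1 := by
    ext b j
    rw [Matrix.mul_apply, Matrix.one_apply]
    set h₀ : F := A⁻¹ v₂ w₁ * A⁻¹ v₃ w₂ - A⁻¹ v₂ w₂ * A⁻¹ v₃ w₁ with hh₀
    set h₁ : F := -(A⁻¹ b.1 w₁ * A⁻¹ v₃ w₂ - A⁻¹ b.1 w₂ * A⁻¹ v₃ w₁) with hh₁
    set h₂ : F := A⁻¹ b.1 w₁ * A⁻¹ v₂ w₂ - A⁻¹ b.1 w₂ * A⁻¹ v₂ w₁ with hh₂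
    have key : ∀ k : {i : ι // i ≠ w₁ ∧ i ≠ w₂},
        C b k * B k j = (A⁻¹ b.1 k.1 * A k.1 j.1 * h₀ + A⁻¹ v₂ k.1 * A k.1 j.1 * h₁
          + A⁻¹ v₃ k.1 * A k.1 j.1 * h₂) / d := by
      intro k
      rw [hB, hCapp, Matrix.det_fin_three, hh₀, hh₁, hh₂]
      simp only [Matrix.cons_val', Matrix.cons_val_zero, Matrix.cons_val_one, Matrix.head_cons,
        Matrix.empty_val', Matrix.cons_val_fin_one, Matrix.head_fin_const, Matrix.cons_val_two,
        Matrix.tail_cons, Matrix.of_apply]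
      ring
    rw [Finset.sum_congr rfl (fun k _ => key k), ← Finset.sum_div,
      Finset.sum_add_distrib, Finset.sum_add_distrib,
      ← Finset.sum_mul, ← Finset.sum_mul, ← Finset.sum_mul,
      hT b.1 j.1, hT v₂ j.1, hT v₃ j.1, if_neg (fun hh : v₂ = j.1 => j.2.1 hh.symm),
      if_neg (fun hh : v₃ = j.1 => j.2.2 hh.symm)]
    by_cases h : b.1 = j.1
    · rw [if_pos h, if_pos (by exact Subtype.ext h), div_eq_iff hd0, hd]
      simp only [hh₀, hh₁, hh₂]
      ring
    · rw [if_neg h, if_neg (fun hh => h (congrArg Subtype.val hh)), div_eq_iff hd0, hd]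
      simp only [hh₀, hh₁, hh₂]
      ring
  refine ⟨⟨C, hBC, hCB⟩, ?_⟩
  intro C' h1 h2 b hb w hw'
  have hC' : C' = C := by
    calc C' = C' * (B * C) := by rw [hBC, Matrix.mul_one]
    _ = (C' * B) * C := by rw [Matrix.mul_assoc]
    _ = C := by rw [h2, Matrix.one_mul]
  rw [hC', hCapp, hdet2]
end
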